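/- arXiv:math/0301262 — 3 statements merged into one kernel-verified Lean document; each statement's English description precedes it below -/
import Mathlib

section
/- Let (A,m,k) be a noetherian local ring, F a minimal acyclic complex of finitely generated free A-modules of length s with boundary maps d_i, and x ∈ m a non-zerodivisor contained in some column ideal of d_i for some i ≥ 2. Then the complex A/(x) ⊗_A F truncated as 0 → F̄_s → ⋯ → F̄_2 → F̄_1 is a minimal acyclic complex of free A/(x)-modules, where bars denote reduction mod x. -/
/-! Reducing the matrices of the differentials mod `x` commutes with evaluating them, so
minimality descends: the image of `m` lies in the maximal ideal of `A/(x)`. For exactness at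
`F̄_{i+1}`, `i ≥ 1`, lift a cycle to `v` with `d v = x w`. Then `x · d w = d d v = 0`, and since
`x` is a non-zerodivisor `d w = 0`, so `w = d u`; now `v - x u` is a cycle of `F`, hence a
boundary, and `v̄` is a boundary of `F̄`. This is the vanishing of `Tor_j(A/(x), coker d_1)`
for `j ≥ 2`. -/

open CategoryTheory

noncomputable section

/-- `gradeGE I n` : the ideal `I` has grade (length of a longest regular sequence contained
in it) at least `n`, with the convention that the unit ideal has grade `∞`. -/
def gradeGE (A : Type) [CommRing A] (I : Ideal A) (n : ℕ) : Prop :=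
  I = ⊤ ∨ ∃ rs : List A, rs.length = n ∧ (∀ r ∈ rs, r ∈ I) ∧ RingTheory.Sequence.IsRegular A rs

/-- A complex `0 → F_s → ⋯ → F_1 → F_0` of finitely generated free `A`-modules;
`d i : F_{i+1} → F_i` corresponds to the boundary map `d_{i+1}`. -/
structure FreeComplex (A : Type) [CommRing A] (s : ℕ) where
  rk : ℕ → ℕ
  d : ∀ i : ℕ, (Fin (rk (i+1)) → A) →ₗ[A] (Fin (rk i) → A)
  bounded : ∀ i : ℕ, s < i → rk i = 0

/-- Acyclicity : `H_i = 0` for all `i ≥ 1`. -/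
def FreeComplex.Acyclic {A : Type} [CommRing A] {s : ℕ} (F : FreeComplex A s) : Prop :=
  ∀ i, LinearMap.ker (F.d i) = LinearMap.range (F.d (i+1))

/-- Minimality : `k ⊗ F` has null differentials, i.e. all boundary maps land in `m F`. -/
def FreeComplex.Minimal {A : Type} [CommRing A] [IsLocalRing A] {s : ℕ}
    (F : FreeComplex A s) : Prop :=
  ∀ i, LinearMap.range (F.d i) ≤
    (IsLocalRing.maximalIdeal A) • (⊤ : Submodule A (Fin (F.rk i) → A))

/-- The column ideal of the `j`-th column of the matrix of `f` with respect to the bases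
`b` and `c`. -/
def columnIdeal {A : Type} [CommRing A] {m n : ℕ} (f : (Fin m → A) →ₗ[A] (Fin n → A))
    (b : Module.Basis (Fin m) A (Fin m → A)) (c : Module.Basis (Fin n) A (Fin n → A)) (j : Fin m) : Ideal A :=
  Ideal.span (Set.range fun i => LinearMap.toMatrix b c f i j)

/-- The quotient of a local ring by an element of the maximal ideal is local. -/
lemma quotLocalOfMem {A : Type} [CommRing A] [IsLocalRing A] {x : A}
    (hx : x ∈ IsLocalRing.maximalIdeal A) : IsLocalRing (A ⧸ Ideal.span {x}) := by
  have hne : Ideal.span {x} ≠ ⊤ := by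
    intro h
    exact (IsLocalRing.maximalIdeal.isMaximal A).ne_top
      (top_le_iff.mp (h ▸ Ideal.span_le.mpr (Set.singleton_subset_iff.mpr hx)))
  have : Nontrivial (A ⧸ Ideal.span {x}) := Ideal.Quotient.nontrivial_iff.mpr hne
  exact IsLocalRing.of_surjective' (Ideal.Quotient.mk _) Ideal.Quotient.mk_surjective

open LinearMap

theorem exists_eq_smul_add_of_map_eq_smul {R M₀ M₁ M₂ M₃ : Type*} [CommRing R]
    [AddCommGroup M₀] [AddCommGroup M₁] [AddCommGroup M₂] [AddCommGroup M₃]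
    [Module R M₀] [Module R M₁] [Module R M₂] [Module R M₃]
    {e : M₁ →ₗ[R] M₀} {f : M₂ →ₗ[R] M₁} {g : M₃ →ₗ[R] M₂}
    (hef : ker e = range f) (hfg : ker f = range g) {x : R} (hx : IsSMulRegular M₀ x)
    {v : M₂} {w : M₁} (hv : f v = x • w) : ∃ u t, v = x • u + g t := by
  have hew : e w = 0 := by
    refine hx (?_ : x • e w = x • 0)
    rw [← map_smul, ← hv, smul_zero, ← mem_ker, hef]
    exact mem_range_self f v
  obtain ⟨u, rfl⟩ : w ∈ range f := hef ▸ hew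
  obtain ⟨t, ht⟩ : v - x • u ∈ range g := by
    rw [← hfg, mem_ker, map_sub, map_smul, hv, sub_self]
  exact ⟨u, t, by rw [ht, add_sub_cancel]⟩

theorem Ideal.Quotient.mk_span_singleton_comp_eq_zero_iff {R ι : Type*} [CommRing R] {x : R}
    {v : ι → R} : Ideal.Quotient.mk (Ideal.span {x}) ∘ v = 0 ↔ ∃ w, v = x • w := by
  simp only [funext_iff, Function.comp_apply, Pi.zero_apply, Ideal.Quotient.eq_zero_iff_mem,
    Ideal.mem_span_singleton, Pi.smul_apply, smul_eq_mul]
  exact Classical.skolem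

theorem comp_mem_smul_top_of_mem_smul_top {R S ι : Type*} [CommRing R] [CommRing S]
    (φ : R →+* S) {I : Ideal R} {J : Ideal S} (hIJ : I.map φ ≤ J) {v : ι → R}
    (hv : v ∈ I • (⊤ : Submodule R (ι → R))) : φ ∘ v ∈ J • (⊤ : Submodule S (ι → S)) := by
  refine Submodule.smul_induction_on hv (fun r hr w _ => ?_) (fun v w hv hw => ?_)
  · have : φ ∘ (r • w) = φ r • (φ ∘ w) := by funext; simp
    exact this ▸ Submodule.smul_mem_smul (hIJ (Ideal.mem_map_of_mem φ hr)) trivial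
  · have : φ ∘ (v + w) = φ ∘ v + φ ∘ w := by funext; simp
    exact this ▸ add_mem hv hw

section BaseChange

variable {R S : Type*} [CommRing R] [CommRing S] {ι κ : Type*} [Fintype ι] [DecidableEq ι]

def LinearMap.piBaseChange (φ : R →+* S) (f : (ι → R) →ₗ[R] (κ → R)) : (ι → S) →ₗ[S] (κ → S) :=
  Matrix.toLin' ((LinearMap.toMatrix' f).map φ)

theorem LinearMap.piBaseChange_apply_comp (φ : R →+* S) (f : (ι → R) →ₗ[R] (κ → R))
    (v : ι → R) : f.piBaseChange φ (φ ∘ v) = φ ∘ f v := by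
  funext k
  rw [piBaseChange, Matrix.toLin'_apply, Function.comp_apply, ← RingHom.map_mulVec,
    LinearMap.toMatrix'_mulVec]

theorem LinearMap.range_piBaseChange_le_smul_top {φ : R →+* S} (hφ : Function.Surjective φ)
    {I : Ideal R} {J : Ideal S} (hIJ : I.map φ ≤ J) {f : (ι → R) →ₗ[R] (κ → R)}
    (hf : range f ≤ I • ⊤) : range (f.piBaseChange φ) ≤ J • ⊤ := by
  rintro _ ⟨w, rfl⟩
  obtain ⟨v, rfl⟩ := hφ.comp_left w
  rw [piBaseChange_apply_comp]
  exact comp_mem_smul_top_of_mem_smul_top φ hIJ (hf (mem_range_self f v))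

theorem LinearMap.ker_piBaseChange_eq_range {ι₀ ι₁ ι₂ ι₃ : Type*} [Fintype ι₂] [DecidableEq ι₂]
    [Fintype ι₃] [DecidableEq ι₃] {x : R} (hx : IsSMulRegular R x)
    {e : (ι₁ → R) →ₗ[R] (ι₀ → R)} {f : (ι₂ → R) →ₗ[R] (ι₁ → R)} {g : (ι₃ → R) →ₗ[R] (ι₂ → R)}
    (hef : ker e = range f) (hfg : ker f = range g) :
    ker (f.piBaseChange (Ideal.Quotient.mk (Ideal.span {x}))) =
      range (g.piBaseChange (Ideal.Quotient.mk (Ideal.span {x}))) := by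
  set φ := Ideal.Quotient.mk (Ideal.span {x})
  have hφ : Function.Surjective φ := Ideal.Quotient.mk_surjective
  apply le_antisymm
  · intro vbar hv
    obtain ⟨v, rfl⟩ := hφ.comp_left vbar
    rw [mem_ker, piBaseChange_apply_comp, Ideal.Quotient.mk_span_singleton_comp_eq_zero_iff] at hv
    obtain ⟨w, hw⟩ := hv
    obtain ⟨u, t, rfl⟩ :=
      exists_eq_smul_add_of_map_eq_smul hef hfg (IsSMulRegular.pi fun _ => hx) hw
    refine ⟨φ ∘ t, ?_⟩
    rw [piBaseChange_apply_comp]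
    funext k
    simp [φ]
  · rintro _ ⟨wbar, rfl⟩
    obtain ⟨w, rfl⟩ := hφ.comp_left wbar
    have hfg_zero : f (g w) = 0 := hfg.ge (mem_range_self g w)
    rw [mem_ker, piBaseChange_apply_comp, piBaseChange_apply_comp, hfg_zero]
    funext k
    simp

end BaseChange

theorem reduction_mod_nonzerodivisor_general
    (A : Type) [CommRing A] [IsLocalRing A]
    (s : ℕ) (F : FreeComplex A s) (hac : F.Acyclic) (hmin : F.Minimal)
    (x : A) (hxm : x ∈ IsLocalRing.maximalIdeal A) (hxreg : x ∈ nonZeroDivisors A) :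
    letI : IsLocalRing (A ⧸ Ideal.span {x}) := quotLocalOfMem hxm
    let dbar : ∀ i : ℕ, (Fin (F.rk (i+1)) → A ⧸ Ideal.span {x}) →ₗ[A ⧸ Ideal.span {x}]
        (Fin (F.rk i) → A ⧸ Ideal.span {x}) :=
      fun i => Matrix.toLin'
        ((LinearMap.toMatrix' (F.d i)).map (Ideal.Quotient.mk (Ideal.span {x})))
    (∀ i : ℕ, 1 ≤ i → LinearMap.ker (dbar i) = LinearMap.range (dbar (i+1))) ∧
    (∀ i : ℕ, 1 ≤ i → LinearMap.range (dbar i) ≤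
      (IsLocalRing.maximalIdeal (A ⧸ Ideal.span {x})) •
        (⊤ : Submodule (A ⧸ Ideal.span {x}) (Fin (F.rk i) → A ⧸ Ideal.span {x}))) := by
  intro dbar
  have := quotLocalOfMem hxm
  have hx_reg : IsSMulRegular A x :=
    (isRegular_iff_mem_nonZeroDivisors.mpr hxreg).left.isSMulRegular
  refine ⟨fun i hi => ?_, fun i _ => ?_⟩
  · obtain ⟨n, rfl⟩ : ∃ n, i = n + 1 := ⟨i - 1, by omega⟩
    exact ker_piBaseChange_eq_range hx_reg (hac n) (hac (n + 1))
  · have := IsLocalHom.of_surjective _ (Ideal.Quotient.mk_surjective (I := Ideal.span {x}))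
    exact range_piBaseChange_le_smul_top Ideal.Quotient.mk_surjective
      (IsLocalRing.map_maximalIdeal_le _) (hmin i)

/-- If `x ∈ m` is a non-zerodivisor lying in a column ideal of the boundary
map `d_{j+1}` (`j ≥ 1`) of a minimal acyclic complex `F` of finitely generated free modules,
then the reduction mod `x` of the truncation `0 → F̄_s → ⋯ → F̄_1` is a minimal acyclic complex
of free `A/(x)`-modules. -/
theorem reduction_mod_nonzerodivisor
    (A : Type) [CommRing A] [IsNoetherianRing A] [IsLocalRing A]
    (s : ℕ) (F : FreeComplex A s) (hac : F.Acyclic) (hmin : F.Minimal)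
    (x : A) (hxm : x ∈ IsLocalRing.maximalIdeal A) (hxreg : x ∈ nonZeroDivisors A)
    (j : ℕ) (hj1 : 1 ≤ j) (hjs : j + 1 ≤ s)
    (b : Module.Basis (Fin (F.rk (j+1))) A (Fin (F.rk (j+1)) → A))
    (c : Module.Basis (Fin (F.rk j)) A (Fin (F.rk j) → A))
    (col : Fin (F.rk (j+1)))
    (hx : x ∈ columnIdeal (F.d j) b c col) :
    letI : IsLocalRing (A ⧸ Ideal.span {x}) := quotLocalOfMem hxm
    let dbar : ∀ i : ℕ, (Fin (F.rk (i+1)) → A ⧸ Ideal.span {x}) →ₗ[A ⧸ Ideal.span {x}]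
        (Fin (F.rk i) → A ⧸ Ideal.span {x}) :=
      fun i => Matrix.toLin'
        ((LinearMap.toMatrix' (F.d i)).map (Ideal.Quotient.mk (Ideal.span {x})))
    (∀ i : ℕ, 1 ≤ i → LinearMap.ker (dbar i) = LinearMap.range (dbar (i+1))) ∧
    (∀ i : ℕ, 1 ≤ i → LinearMap.range (dbar i) ≤
      (IsLocalRing.maximalIdeal (A ⧸ Ideal.span {x})) •
        (⊤ : Submodule (A ⧸ Ideal.span {x}) (Fin (F.rk i) → A ⧸ Ideal.span {x}))) :=
  reduction_mod_nonzerodivisor_general A s F hac hmin x hxm hxreg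
end
end

section
/- Let (A,m,k) be a noetherian local ring and F a minimal acyclic complex of finitely generated free modules with boundary maps d_i. Then every column ideal of a matrix for d_1 has grade ≥ 1 for all choices of bases of F_1 and F_0 if and only if every minimal generator z of the syzygy module Z = im d_1 ⊂ F_0 has Ann z = 0. -/
open CategoryTheory

noncomputable section

-- helper 1: pi membership in I • ⊤
lemma mem_smul_top_pi {A : Type} [CommRing A] {n : ℕ} (I : Ideal A) (v : Fin n → A) :
    v ∈ I • (⊤ : Submodule A (Fin n → A)) ↔ ∀ i, v i ∈ I := by
  constructor
  · intro hv i
    refine Submodule.smul_induction_on hv (fun a ha m _ => ?_) (fun x y hx hy => ?_)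
    · simpa using I.mul_mem_right (m i) ha
    · simpa using I.add_mem hx hy
  · intro h
    have hv : v = ∑ i : Fin n, (v i) • (Pi.single i (1 : A) : Fin n → A) := by
      ext j
      rw [Finset.sum_apply]
      simp [Pi.single_apply, eq_comm]
    rw [hv]
    exact Submodule.sum_mem _ fun i _ => Submodule.smul_mem_smul (h i) trivial

-- helper 2: basis version
lemma mem_smul_top_basis {A : Type} [CommRing A] {n : ℕ} (I : Ideal A)
    (b : Module.Basis (Fin n) A (Fin n → A)) (v : Fin n → A) :
    v ∈ I • (⊤ : Submodule A (Fin n → A)) ↔ ∀ i, b.repr v i ∈ I := by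
  have he : v ∈ I • (⊤ : Submodule A (Fin n → A)) ↔
      b.equivFun v ∈ (I • (⊤ : Submodule A (Fin n → A))).map (b.equivFun : (Fin n → A) →ₗ[A] (Fin n → A)) := by
    constructor
    · intro h; exact ⟨v, h, rfl⟩
    · rintro ⟨w, hw, hww⟩
      have : w = v := b.equivFun.injective hww
      rwa [this] at hw
  rw [he, Submodule.map_smul'']
  have : (⊤ : Submodule A (Fin n → A)).map (b.equivFun : (Fin n → A) →ₗ[A] (Fin n → A)) = ⊤ := by
    rw [Submodule.map_top, LinearEquiv.range]
  rw [this, mem_smul_top_pi]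
  simp [Module.Basis.equivFun_apply]


-- Ass (M × N) ⊆ Ass M ∪ Ass N
lemma assPrimes_prod_subset {A : Type} [CommRing A] {M N : Type} [AddCommGroup M] [Module A M]
    [AddCommGroup N] [Module A N] :
    associatedPrimes A (M × N) ⊆ associatedPrimes A M ∪ associatedPrimes A N := by
  rintro p ⟨hp, ⟨x, y⟩, hxy⟩
  have hann : (⊥ : Submodule A (M × N)).colon {((x, y) : M × N)} =
      (⊥ : Submodule A M).colon {x} ⊓ (⊥ : Submodule A N).colon {y} := by
    ext r
    simp only [Submodule.mem_inf, Submodule.mem_colon_singleton, Submodule.mem_bot, Prod.smul_mk,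
      Prod.mk_eq_zero]
  rw [hann, Ideal.radical_inf] at hxy
  have h1 : p ≤ ((⊥ : Submodule A M).colon {x}).radical := hxy.le.trans inf_le_left
  have h2 : p ≤ ((⊥ : Submodule A N).colon {y}).radical := hxy.le.trans inf_le_right
  have : ((⊥ : Submodule A M).colon {x}).radical ≤ p ∨
      ((⊥ : Submodule A N).colon {y}).radical ≤ p := by
    exact (Ideal.IsPrime.inf_le hp).mp hxy.ge
  rcases this with h | h
  · exact Or.inl ⟨hp, x, le_antisymm h1 h⟩
  · exact Or.inr ⟨hp, y, le_antisymm h2 h⟩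

open Submodule in
lemma assPrimes_quot_inf_subset {A : Type} [CommRing A] [IsNoetherianRing A]
    [DecidableEq (Ideal A)]
    (s : Finset (Ideal A)) (h : ∀ J ∈ s, J.IsPrimary) :
    associatedPrimes A (A ⧸ (s.inf id : Ideal A)) ⊆ ↑(s.image Ideal.radical) := by
  classical
  induction s using Finset.induction_on with
  | empty =>
    haveI : Subsingleton (A ⧸ ((∅ : Finset (Ideal A)).inf id : Ideal A)) := by
      rw [Finset.inf_empty]
      exact Submodule.Quotient.subsingleton_iff.mpr rfl
    rw [associatedPrimes.eq_empty_of_subsingleton]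
    simp
  | @insert J s hJ ih =>
    have hins : ((insert J s).inf id : Ideal A) = J ⊓ (s.inf id : Ideal A) := by
      rw [Finset.inf_insert]; rfl
    set K := (s.inf id : Ideal A) with hK
    let f : (A ⧸ (J ⊓ K : Ideal A)) →ₗ[A] (A ⧸ J) × (A ⧸ K) :=
      LinearMap.prod (Submodule.mapQ _ _ LinearMap.id inf_le_left)
        (Submodule.mapQ _ _ LinearMap.id inf_le_right)
    have hf : Function.Injective f := by
      rw [← LinearMap.ker_eq_bot, eq_bot_iff]
      intro x hx
      obtain ⟨a, rfl⟩ := Submodule.Quotient.mk_surjective _ x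
      simp only [LinearMap.mem_ker, LinearMap.prod_apply, Function.prod, Prod.mk_eq_zero, f] at hx
      obtain ⟨h1, h2⟩ := hx
      rw [Submodule.mapQ_apply, Submodule.Quotient.mk_eq_zero] at h1 h2
      rw [Submodule.mem_bot, Submodule.Quotient.mk_eq_zero]
      exact ⟨h1, h2⟩
    intro p hp
    rw [hins] at hp
    have hp2 := associatedPrimes.subset_of_injective hf hp
    have hp3 := assPrimes_prod_subset hp2
    rw [Finset.image_insert]
    rcases hp3 with h1 | h2
    · rw [associatedPrimes.eq_singleton_of_isPrimary (h J (Finset.mem_insert_self J s))] at h1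
      simp only [Set.mem_singleton_iff] at h1
      subst h1
      simp
    · have := ih (fun J hJs => h J (Finset.mem_insert_of_mem hJs)) h2
      simp only [Finset.coe_insert, Set.mem_insert_iff]
      exact Or.inr this

lemma exists_ann_of_forall_zd {A : Type} [CommRing A] [IsNoetherianRing A] (I : Ideal A)
    (h : ∀ r ∈ I, ∃ u : A, u ≠ 0 ∧ r * u = 0) :
    ∃ u : A, u ≠ 0 ∧ ∀ r ∈ I, r * u = 0 := by
  classical
  obtain ⟨s, hs0, hsp⟩ := Submodule.isLasker A A ⊥
  have hAss : associatedPrimes A A ⊆ ↑(s.image Ideal.radical) := by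
    have h2 := assPrimes_quot_inf_subset s hsp
    rw [hs0] at h2
    have e : (A ⧸ (⊥ : Ideal A)) ≃ₗ[A] A := Submodule.quotEquivOfEqBot _ rfl
    rwa [LinearEquiv.AssociatedPrimes.eq e] at h2
  set t := (s.image Ideal.radical).filter (· ∈ associatedPrimes A A) with ht
  have hsub : (I : Set A) ⊆ ⋃ p ∈ (↑t : Set (Ideal A)), ((id p : Ideal A) : Set A) := by
    intro r hr
    have hr2 : r ∈ ⋃ p ∈ associatedPrimes A A, (p : Set A) := by
      rw [biUnion_associatedPrimes_eq_zero_divisors]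
      obtain ⟨u, hu, hru⟩ := h r hr
      exact ⟨u, hu, by rw [smul_eq_mul]; exact hru⟩
    simp only [Set.mem_iUnion, SetLike.mem_coe, exists_prop] at hr2 ⊢
    obtain ⟨p, hpA, hrp⟩ := hr2
    exact ⟨p, Finset.mem_filter.mpr ⟨hAss hpA, hpA⟩, hrp⟩
  have hprime : ∀ p ∈ t, p ≠ ⊥ → p ≠ ⊥ → Ideal.IsPrime (id p : Ideal A) :=
    fun p hpt _ _ => ((Finset.mem_filter.mp hpt).2 : IsAssociatedPrime p A).isPrime
  obtain ⟨p, hpt, hIp⟩ := (Ideal.subset_union_prime (⊥ : Ideal A) ⊥ hprime).mp hsub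
  obtain ⟨hp, u, hu⟩ := isAssociatedPrime_iff.mp ((Finset.mem_filter.mp hpt).2 : IsAssociatedPrime p A)
  refine ⟨u, ?_, ?_⟩
  · rintro rfl
    rw [Submodule.colon_singleton_zero] at hu
    exact hp.ne_top hu
  · intro r hr
    have h3 := hIp hr
    simp only [id_eq] at h3
    rw [hu, Submodule.mem_colon_singleton, Submodule.mem_bot, smul_eq_mul] at h3
    exact h3


/-- Replace the `i0`-th standard basis vector by `x` when `x i0` is a unit. -/
lemma exists_basis_replace {A : Type} [CommRing A] {n : ℕ} (x : Fin n → A) (i0 : Fin n)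
    (hunit : IsUnit (x i0)) : ∃ b : Module.Basis (Fin n) A (Fin n → A), b i0 = x := by
  obtain ⟨u, hu⟩ := hunit
  set cvec : Fin n → A := x - Pi.single i0 1 with hcvec
  have hc0 : cvec i0 = x i0 - 1 := by simp [hcvec]
  set T : (Fin n → A) →ₗ[A] (Fin n → A) :=
    LinearMap.id + (LinearMap.proj i0).smulRight cvec with hT
  set S : (Fin n → A) →ₗ[A] (Fin n → A) :=
    LinearMap.id - (((u⁻¹ : Aˣ) : A) • (LinearMap.proj i0 : (Fin n → A) →ₗ[A] A)).smulRight cvec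
    with hS
  have hinv : ((u⁻¹ : Aˣ) : A) * x i0 = 1 := by rw [← hu]; exact u.inv_mul
  have h1 : T.comp S = LinearMap.id := by
    apply LinearMap.ext; intro w
    funext j
    simp only [LinearMap.comp_apply, hT, hS, LinearMap.add_apply, LinearMap.sub_apply,
      LinearMap.id_apply, LinearMap.smulRight_apply, LinearMap.proj_apply, LinearMap.smul_apply,
      smul_eq_mul, Pi.add_apply, Pi.sub_apply, Pi.smul_apply]
    rw [hc0]
    set uv := ((u⁻¹ : Aˣ) : A)
    set c := cvec j
    set a := x i0
    linear_combination (-(w i0 * c)) * hinv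
  have h2 : S.comp T = LinearMap.id := by
    apply LinearMap.ext; intro v
    funext j
    simp only [LinearMap.comp_apply, hT, hS, LinearMap.add_apply, LinearMap.sub_apply,
      LinearMap.id_apply, LinearMap.smulRight_apply, LinearMap.proj_apply, LinearMap.smul_apply,
      smul_eq_mul, Pi.add_apply, Pi.sub_apply, Pi.smul_apply]
    rw [hc0]
    linear_combination (-(v i0 * cvec j)) * hinv
  let e : (Fin n → A) ≃ₗ[A] (Fin n → A) := LinearEquiv.ofLinear T S h1 h2
  refine ⟨(Pi.basisFun A (Fin n)).map e, ?_⟩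
  rw [Module.Basis.map_apply]
  show T ((Pi.basisFun A (Fin n)) i0) = x
  simp [hT, Pi.basisFun_apply, hcvec]

/-- For a minimal acyclic complex of finitely generated free modules,
every column ideal of `d_1` has grade at least `1` for all choices of bases if and only if
every minimal generator `z` of the syzygy `Z = im d_1 ⊆ F_0` has `Ann z = 0`. -/
theorem columnIdeal_grade_iff_ann_of_minimal_generators
    (A : Type) [CommRing A] [IsNoetherianRing A] [IsLocalRing A]
    (s : ℕ) (F : FreeComplex A s) (hac : F.Acyclic) (hmin : F.Minimal) (hs : 1 ≤ s) :
    (∀ (b : Module.Basis (Fin (F.rk 1)) A (Fin (F.rk 1) → A))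
        (c : Module.Basis (Fin (F.rk 0)) A (Fin (F.rk 0) → A)) (col : Fin (F.rk 1)),
        gradeGE A (columnIdeal (F.d 0) b c col) 1) ↔
    (∀ z ∈ LinearMap.range (F.d 0),
      z ∉ (IsLocalRing.maximalIdeal A) • (LinearMap.range (F.d 0)) →
      ∀ a : A, a • z = 0 → a = 0) := by
  classical
  set m := IsLocalRing.maximalIdeal A with hm
  have hone : (1 : A) ∉ m := (Ideal.ne_top_iff_one _).mp
    (IsLocalRing.maximalIdeal.isMaximal A).ne_top
  have hker : LinearMap.ker (F.d 0) ≤ m • (⊤ : Submodule A (Fin (F.rk 1) → A)) := by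
    rw [hac 0]; exact hmin 1
  have hsmulmap : (m • (⊤ : Submodule A (Fin (F.rk 1) → A))).map (F.d 0)
      = m • LinearMap.range (F.d 0) := by
    rw [Submodule.map_smul'', Submodule.map_top]
  have hmingen : ∀ (b : Module.Basis (Fin (F.rk 1)) A (Fin (F.rk 1) → A)) (j : Fin (F.rk 1)),
      F.d 0 (b j) ∉ m • LinearMap.range (F.d 0) := by
    intro b j hmem
    rw [← hsmulmap] at hmem
    obtain ⟨x, hx, hxe⟩ := hmem
    have h1 : b j - x ∈ LinearMap.ker (F.d 0) := by
      rw [LinearMap.mem_ker, map_sub, hxe, sub_self]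
    have hbj : b j ∈ m • (⊤ : Submodule A (Fin (F.rk 1) → A)) := by
      have h2 := Submodule.add_mem _ (hker h1) hx
      rwa [sub_add_cancel] at h2
    have h3 := (mem_smul_top_basis m b (b j)).mp hbj j
    rw [b.repr_self, Finsupp.single_eq_same] at h3
    exact hone h3
  constructor
  · intro hcol z hz hzm a ha
    obtain ⟨x, rfl⟩ := hz
    have hx : x ∉ m • (⊤ : Submodule A (Fin (F.rk 1) → A)) := by
      intro hx
      exact hzm (by rw [← hsmulmap]; exact ⟨x, hx, rfl⟩)
    rw [mem_smul_top_pi] at hx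
    push_neg at hx
    obtain ⟨i0, hi0⟩ := hx
    have hunit : IsUnit (x i0) := by
      by_contra hnu
      exact hi0 ((IsLocalRing.mem_maximalIdeal (x i0)).mpr hnu)
    obtain ⟨b, hb⟩ := exists_basis_replace x i0 hunit
    have h1 := hcol b (Pi.basisFun A (Fin (F.rk 0))) i0
    have hcI : columnIdeal (F.d 0) b (Pi.basisFun A (Fin (F.rk 0))) i0 =
        Ideal.span (Set.range fun i => (F.d 0) x i) := by
      unfold columnIdeal
      simp only [LinearMap.toMatrix_apply, Pi.basisFun_repr, hb]
    rw [hcI] at h1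
    have hkill : ∀ r ∈ Ideal.span (Set.range fun i => (F.d 0) x i), a * r = 0 := by
      intro r hr
      refine Submodule.span_induction ?_ ?_ ?_ ?_ hr
      · rintro _ ⟨i, rfl⟩
        have h2 := congrFun ha i
        simpa [smul_eq_mul] using h2
      · simp
      · intro u v _ _ hu hv; rw [mul_add, hu, hv, add_zero]
      · intro t u _ htu; rw [smul_eq_mul, ← mul_assoc, mul_comm a t, mul_assoc, htu, mul_zero]
    rcases h1 with htop | ⟨rs, hlen, hmem, hreg⟩
    · have h2 := hkill 1 (htop ▸ Submodule.mem_top)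
      simpa using h2
    · obtain ⟨r, rfl⟩ := List.length_eq_one_iff.mp hlen
      have hreg' : IsSMulRegular A r :=
        (RingTheory.Sequence.isWeaklyRegular_singleton_iff A r).mp hreg.toIsWeaklyRegular
      have h2 : r • a = r • 0 := by
        rw [smul_eq_mul, smul_zero, mul_comm]
        exact hkill r (hmem r (List.mem_singleton_self r))
      exact hreg' h2
  · intro hann b c j
    set z := F.d 0 (b j) with hzdef
    have hz : z ∈ LinearMap.range (F.d 0) := ⟨b j, rfl⟩
    have hza := hann z hz (hmingen b j)
    by_cases hI : columnIdeal (F.d 0) b c j = ⊤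
    · exact Or.inl hI
    refine Or.inr ?_
    have hcI : columnIdeal (F.d 0) b c j = Ideal.span (Set.range fun i => c.repr z i) := by
      unfold columnIdeal
      simp only [LinearMap.toMatrix_apply, hzdef]
    have hex : ∃ r ∈ columnIdeal (F.d 0) b c j, IsSMulRegular A r := by
      by_contra hcon
      push_neg at hcon
      have hzd : ∀ r ∈ columnIdeal (F.d 0) b c j, ∃ u : A, u ≠ 0 ∧ r * u = 0 := by
        intro r hr
        have h2 := hcon r hr
        rw [isSMulRegular_iff_right_eq_zero_of_smul] at h2
        push_neg at h2
        obtain ⟨u, hu1, hu2⟩ := h2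
        exact ⟨u, hu2, by simpa [smul_eq_mul] using hu1⟩
      obtain ⟨u, hu0, hukill⟩ := exists_ann_of_forall_zd _ hzd
      have huz : u • z = 0 := by
        apply c.repr.injective
        rw [map_smul, map_zero]
        ext i
        rw [Finsupp.smul_apply, smul_eq_mul, mul_comm]
        exact hukill (c.repr z i) (hcI ▸ Ideal.subset_span ⟨i, rfl⟩)
      exact hu0 (hza u huz)
    obtain ⟨r, hrI, hreg⟩ := hex
    refine ⟨[r], rfl, ?_, ?_, ?_⟩
    · intro r' hr'
      rw [List.mem_singleton] at hr'
      rw [hr']; exact hrI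
    · exact (RingTheory.Sequence.isWeaklyRegular_singleton_iff A r).mpr hreg
    · intro htop
      have hle : Ideal.ofList [r] • (⊤ : Submodule A A) ≤ m := by
        refine Submodule.smul_le.mpr fun a' ha' n _ => ?_
        have ha'I : a' ∈ columnIdeal (F.d 0) b c j := by
          rw [Ideal.ofList_singleton] at ha'
          exact ((Ideal.span_singleton_le_iff_mem _).mpr hrI) ha'
        have ha'm : a' ∈ m := IsLocalRing.le_maximalIdeal hI ha'I
        rw [smul_eq_mul]
        exact Ideal.mul_mem_right n m ha'm
      have h2 : (1 : A) ∈ m := hle (htop ▸ Submodule.mem_top)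
      exact hone h2
end
end

section
/- Let (A,m,k) be a noetherian local ring and G a finite free resolution of a finitely generated A-module M. Then G is isomorphic, as a complex, to the direct sum of a minimal free resolution F of M and an exact complex H of finitely generated free modules (a free resolution of 0). -/
open CategoryTheory

noncomputable section


set_option maxHeartbeats 1000000
namespace ESplit

set_option linter.unusedVariables false
set_option linter.unusedSectionVars false


variable {A : Type} [CommRing A]

def ecast {a b : ℕ} (h : a = b) : (Fin a → A) ≃ₗ[A] (Fin b → A) :=
  LinearEquiv.funCongrLeft A A (finCongr h.symm)

@[simp] lemma ecast_apply {a b : ℕ} (h : a = b) (x : Fin a → A) (q : Fin b) :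
    ecast h x q = x (Fin.cast h.symm q) := rfl

@[simp] lemma ecast_symm_apply {a b : ℕ} (h : a = b) (x : Fin b → A) (q : Fin a) :
    (ecast h).symm x q = x (Fin.cast h q) := rfl

lemma ecast_self {a : ℕ} (h : a = a) (x : Fin a → A) : ecast h x = x := rfl

lemma ecast_single {a b : ℕ} (h : a = b) (k : Fin a) :
    ecast h (Pi.single k (1:A)) = Pi.single (Fin.cast h k) 1 := by
  subst h; funext q; simp

def del {n : ℕ} (j : Fin (n+1)) : (Fin (n+1) → A) →ₗ[A] (Fin n → A) :=
  LinearMap.funLeft A A j.succAbove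

@[simp] lemma del_apply {n : ℕ} (j : Fin (n+1)) (x : Fin (n+1) → A) (q : Fin n) :
    del j x q = x (j.succAbove q) := rfl

def ins {n : ℕ} (j : Fin (n+1)) : (Fin n → A) →ₗ[A] (Fin (n+1) → A) where
  toFun z := j.insertNth 0 z
  map_add' z w := by
    funext p
    refine Fin.succAboveCases j ?_ ?_ p <;> simp
  map_smul' c z := by
    funext p
    refine Fin.succAboveCases j ?_ ?_ p <;> simp

@[simp] lemma ins_apply_same {n : ℕ} (j : Fin (n+1)) (z : Fin n → A) :
    ins j z j = 0 := by simp [ins]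

@[simp] lemma ins_apply_succAbove {n : ℕ} (j : Fin (n+1)) (z : Fin n → A) (q : Fin n) :
    ins j z (j.succAbove q) = z q := by simp [ins]

lemma ins_del {n : ℕ} (j : Fin (n+1)) (x : Fin (n+1) → A) :
    ins j (del j x) = x - x j • (Pi.single j 1 : Fin (n+1) → A) := by
  funext p
  refine Fin.succAboveCases j ?_ ?_ p
  · simp
  · intro q
    simp [Fin.succAbove_ne, Pi.single_apply, (Fin.succAbove_ne j q).symm]





section Subsingleton
variable {N P : Type} [AddCommGroup N] [Module A N] [AddCommGroup P] [Module A P]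

lemma ker_eq_top_of_sub [Subsingleton P] (f : N →ₗ[A] P) : LinearMap.ker f = ⊤ := by
  ext x; simp [Subsingleton.elim (f x) 0]

lemma surj_of_sub [Subsingleton P] (f : N →ₗ[A] P) : Function.Surjective f :=
  fun x => ⟨0, Subsingleton.elim _ _⟩

lemma range_eq_top_of_sub [Subsingleton P] (f : N →ₗ[A] P) : LinearMap.range f = ⊤ := by
  rw [LinearMap.range_eq_top]; exact surj_of_sub f

lemma range_eq_bot_of_sub [Subsingleton N] (f : N →ₗ[A] P) : LinearMap.range f = ⊥ := by
  ext x
  simp only [LinearMap.mem_range, Submodule.mem_bot]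
  constructor
  · rintro ⟨y, rfl⟩; rw [Subsingleton.elim y 0, map_zero]
  · rintro rfl; exact ⟨0, map_zero f⟩

lemma submodule_eq_of_sub [Subsingleton N] (p q : Submodule A N) : p = q := by
  ext x; simp [Subsingleton.elim x 0]

lemma rank0_subsingleton {n : ℕ} (h : n = 0) : Subsingleton (Fin n → A) := by
  subst h; infer_instance

end Subsingleton

lemma mem_smul_top_iff (I : Ideal A) {n : ℕ} (x : Fin n → A) :
    x ∈ I • (⊤ : Submodule A (Fin n → A)) ↔ ∀ j, x j ∈ I := by
  constructor
  · intro hx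
    refine Submodule.smul_induction_on hx ?_ ?_
    · intro r hr m _ j; exact Ideal.mul_mem_right _ _ hr
    · intro a b ha hb j; exact Ideal.add_mem _ (ha j) (hb j)
  · intro hx
    have : x = ∑ k : Fin n, x k • (Pi.single k 1 : Fin n → A) := by
      funext p
      simp [Pi.single_apply, Finset.sum_ite_eq, mul_ite]
    rw [this]
    exact Submodule.sum_mem _ fun k _ =>
      Submodule.smul_mem_smul (hx k) Submodule.mem_top

lemma prod_inj {N P : Type} [AddCommGroup N] [Module A N] [AddCommGroup P] [Module A P]
    {p p' : Submodule A N} {q q' : Submodule A P}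
    (h : p.prod q = p'.prod q') : p = p' ∧ q = q' := by
  constructor
  · ext x
    have h1 := Submodule.mem_prod (p := p) (q := q) (x := (x, 0))
    have h2 := Submodule.mem_prod (p := p') (q := q') (x := (x, 0))
    rw [h] at h1
    simp only [h2] at h1
    constructor
    · intro hx; exact (h1.mpr ⟨hx, q.zero_mem⟩).1
    · intro hx; exact (h1.mp ⟨hx, q'.zero_mem⟩).1
  · ext x
    have h1 := Submodule.mem_prod (p := p) (q := q) (x := ((0 : N), x))
    have h2 := Submodule.mem_prod (p := p') (q := q') (x := ((0 : N), x))
    rw [h] at h1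
    simp only [h2] at h1
    constructor
    · intro hx; exact (h1.mpr ⟨p.zero_mem, hx⟩).2
    · intro hx; exact (h1.mp ⟨p'.zero_mem, hx⟩).2

lemma range_prodMap {N N' P P' : Type} [AddCommGroup N] [Module A N] [AddCommGroup N'] [Module A N']
    [AddCommGroup P] [Module A P] [AddCommGroup P'] [Module A P']
    (f : N →ₗ[A] P) (g : N' →ₗ[A] P') :
    LinearMap.range (f.prodMap g) = (LinearMap.range f).prod (LinearMap.range g) := by
  ext ⟨a, b⟩
  simp only [LinearMap.mem_range, Submodule.mem_prod, Prod.ext_iff, LinearMap.prodMap_apply]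
  constructor
  · rintro ⟨⟨x, y⟩, hx, hy⟩; exact ⟨⟨x, hx⟩, ⟨y, hy⟩⟩
  · rintro ⟨⟨x, hx⟩, ⟨y, hy⟩⟩; exact ⟨(x, y), hx, hy⟩

lemma comap_fst_ker {N P Q : Type} [AddCommGroup N] [Module A N] [AddCommGroup P] [Module A P]
    [AddCommGroup Q] [Module A Q] (f : N →ₗ[A] Q) :
    LinearMap.ker (f ∘ₗ LinearMap.fst A N P) = (LinearMap.ker f).prod ⊤ := by
  ext ⟨a, b⟩; simp [LinearMap.mem_ker]

/-- transfer of exactness along an isomorphism of augmented complexes -/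
lemma transfer {M : Type} [AddCommGroup M] [Module A M]
    {G K : ℕ → Type} [∀ t, AddCommGroup (G t)] [∀ t, Module A (G t)]
    [∀ t, AddCommGroup (K t)] [∀ t, Module A (K t)]
    (dG : ∀ t, G (t+1) →ₗ[A] G t) (dK : ∀ t, K (t+1) →ₗ[A] K t)
    (epsG : G 0 →ₗ[A] M) (epsK : K 0 →ₗ[A] M)
    (e : ∀ t, G t ≃ₗ[A] K t)
    (hcomm : ∀ t, dK t ∘ₗ (e (t+1) : G (t+1) →ₗ[A] K (t+1)) = (e t : G t →ₗ[A] K t) ∘ₗ dG t)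
    (heps : epsK ∘ₗ (e 0 : G 0 →ₗ[A] K 0) = epsG)
    (hsurj : Function.Surjective epsG)
    (h0 : LinearMap.ker epsG = LinearMap.range (dG 0))
    (hex : ∀ t, LinearMap.ker (dG t) = LinearMap.range (dG (t+1))) :
    Function.Surjective epsK ∧ LinearMap.ker epsK = LinearMap.range (dK 0) ∧
      ∀ t, LinearMap.ker (dK t) = LinearMap.range (dK (t+1)) := by
  have mapker : ∀ (t : ℕ) (f : G t →ₗ[A] M) (g : K t →ₗ[A] M), g ∘ₗ (e t : G t →ₗ[A] K t) = f →
      LinearMap.ker g = Submodule.map (e t : G t →ₗ[A] K t) (LinearMap.ker f) := by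
    intro t f g hfg
    rw [← hfg, LinearMap.ker_comp, Submodule.map_comap_eq, LinearEquiv.range, top_inf_eq]
  have hkerK : ∀ t, LinearMap.ker (dK t) =
      Submodule.map (e (t+1) : G (t+1) →ₗ[A] K (t+1)) (LinearMap.ker (dG t)) := by
    intro t
    have h1 : LinearMap.ker (dK t ∘ₗ (e (t+1) : G (t+1) →ₗ[A] K (t+1))) =
        LinearMap.ker ((e t : G t →ₗ[A] K t) ∘ₗ dG t) := by rw [hcomm t]
    rw [LinearMap.ker_comp, LinearMap.ker_comp, LinearEquiv.ker, Submodule.comap_bot] at h1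
    rw [← h1, Submodule.map_comap_eq, LinearEquiv.range, top_inf_eq]
  have hrangeK : ∀ t, LinearMap.range (dK t) =
      Submodule.map (e t : G t →ₗ[A] K t) (LinearMap.range (dG t)) := by
    intro t
    have h1 : LinearMap.range (dK t ∘ₗ (e (t+1) : G (t+1) →ₗ[A] K (t+1))) =
        LinearMap.range ((e t : G t →ₗ[A] K t) ∘ₗ dG t) := by rw [hcomm t]
    rw [LinearMap.range_comp, LinearMap.range_comp, LinearEquiv.range, Submodule.map_top] at h1
    rw [← h1]
  refine ⟨?_, ?_, ?_⟩
  · intro m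
    obtain ⟨x, hx⟩ := hsurj m
    exact ⟨e 0 x, by rw [← heps] at hx; exact hx⟩
  · rw [mapker 0 epsG epsK heps, hrangeK 0, h0]
  · intro t
    rw [hkerK t, hrangeK (t+1), hex t]


variable {A : Type} [CommRing A]

def sumAll (a b : ℕ) : (Fin a → A) →ₗ[A] (Fin b → A) where
  toFun x := fun _ => ∑ q, x q
  map_add' x y := by funext p; simp [Finset.sum_add_distrib]
  map_smul' c x := by funext p; simp [Finset.mul_sum]

@[simp] lemma sumAll_apply (a b : ℕ) (x : Fin a → A) (p : Fin b) :
    sumAll a b x p = ∑ q, x q := rfl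

lemma sumAll_11 : sumAll (A := A) 1 1 = LinearMap.id := by
  apply LinearMap.ext; intro x; funext q
  have : q = 0 := Subsingleton.elim q 0
  subst this
  simp [sumAll, Fin.sum_univ_one]

lemma subsingleton_of_rank0 (h : (0:ℕ) = 0) : True := trivial

def isEmptyFin {n : ℕ} (h : n = 0) : IsEmpty (Fin n) := h ▸ inferInstanceAs (IsEmpty (Fin 0))

lemma subsingleton_fun {n : ℕ} (h : n = 0) : Subsingleton (Fin n → A) := by
  haveI := isEmptyFin h; infer_instance

lemma submodule_eq_rank0 {n : ℕ} (h : n = 0) (p q : Submodule A (Fin n → A)) : p = q := by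
  haveI := subsingleton_fun (A := A) h
  ext x; simp [Subsingleton.elim x 0]

lemma ker_tgt0 {N : Type} [AddCommGroup N] [Module A N] {b : ℕ} (h : b = 0)
    (f : N →ₗ[A] (Fin b → A)) : LinearMap.ker f = ⊤ := by
  haveI := subsingleton_fun (A := A) h
  ext x; simp [Subsingleton.elim (f x) 0]

lemma surj_tgt0 {N : Type} [AddCommGroup N] [Module A N] {b : ℕ} (h : b = 0)
    (f : N →ₗ[A] (Fin b → A)) : Function.Surjective f := by
  haveI := subsingleton_fun (A := A) h
  exact fun x => ⟨0, Subsingleton.elim _ _⟩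

lemma range_src0 {N : Type} [AddCommGroup N] [Module A N] {a : ℕ} (h : a = 0)
    (f : (Fin a → A) →ₗ[A] N) : LinearMap.range f = ⊥ := by
  haveI := subsingleton_fun (A := A) h
  ext x
  simp only [LinearMap.mem_range, Submodule.mem_bot]
  constructor
  · rintro ⟨y, rfl⟩; rw [Subsingleton.elim y 0, map_zero]
  · rintro rfl; exact ⟨0, map_zero f⟩

lemma ker_sumAll_11 {a b : ℕ} (ha : a = 1) (hb : b = 1) :
    LinearMap.ker (sumAll (A := A) a b) = ⊥ := by
  subst ha; subst hb; rw [sumAll_11, LinearMap.ker_id]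

lemma range_sumAll_11 {a b : ℕ} (ha : a = 1) (hb : b = 1) :
    LinearMap.range (sumAll (A := A) a b) = ⊤ := by
  subst ha; subst hb; rw [sumAll_11, LinearMap.range_id]

lemma surj_sumAll_11 {a b : ℕ} (ha : a = 1) (hb : b = 1) :
    Function.Surjective (sumAll (A := A) a b) := by
  subst ha; subst hb; rw [sumAll_11]; exact fun x => ⟨x, rfl⟩

/-- the rank function of the split-off trivial complex at position `i` -/
def rT (i : ℕ) : ℕ → ℕ := fun t => if t = i ∨ t = i+1 then 1 else 0

lemma rT_i (i : ℕ) : rT i i = 1 := by simp [rT]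
lemma rT_i1 (i : ℕ) : rT i (i+1) = 1 := by simp [rT]
lemma rT_other {i t : ℕ} (h1 : t ≠ i) (h2 : t ≠ i+1) : rT i t = 0 := by
  simp only [rT]; rw [if_neg (by omega)]

lemma dT_exact (i t : ℕ) :
    LinearMap.ker (sumAll (A := A) (rT i (t+1)) (rT i t)) =
      LinearMap.range (sumAll (A := A) (rT i (t+2)) (rT i (t+1))) := by
  rcases eq_or_ne t i with rfl | h1
  · rw [ker_sumAll_11 (rT_i1 t) (rT_i t), range_src0 (rT_other (by omega) (by omega))]
  · rcases eq_or_ne (t+1) i with h2 | h2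
    · rw [ker_tgt0 (rT_other (by omega) (by omega)),
        range_sumAll_11 (by rw [show t+2 = i+1 by omega]; exact rT_i1 i)
          (by rw [h2]; exact rT_i i)]
    · exact submodule_eq_rank0 (rT_other (by omega) (by omega)) _ _

lemma dT0_surj (i : ℕ) : Function.Surjective (sumAll (A := A) (rT i 1) (rT i 0)) := by
  rcases eq_or_ne i 0 with rfl | h
  · exact surj_sumAll_11 (rT_i1 0 ▸ rT_i1 0) (rT_i 0)
  · exact surj_tgt0 (rT_other (by omega) (by omega)) _

def finProdEquiv (a b : ℕ) : (Fin (a+b) → A) ≃ₗ[A] ((Fin a → A) × (Fin b → A)) :=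
  (LinearEquiv.funCongrLeft A A finSumFinEquiv).trans
    (LinearEquiv.sumArrowLequivProdArrow _ _ A A)


/-- zero-padding equivalence -/
def padEquiv {a b c : ℕ} (hab : a = b) (hc : c = 0) :
    (Fin a → A) ≃ₗ[A] ((Fin b → A) × (Fin c → A)) := by
  subst hab; subst hc
  exact LinearEquiv.ofLinear (LinearMap.prod LinearMap.id 0)
    (LinearMap.fst A _ _)
    (by
      apply LinearMap.ext; rintro ⟨x, y⟩
      exact Prod.ext rfl (Subsingleton.elim _ _))
    (by apply LinearMap.ext; intro x; rfl)

lemma padEquiv_fst {a b c : ℕ} (hab : a = b) (hc : c = 0) (x : Fin a → A) (q : Fin b) :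
    (padEquiv hab hc x).1 q = x (Fin.cast hab.symm q) := by
  subst hab; subst hc; rfl

lemma conj_ker {N1 N2 P1 P2 : Type} [AddCommGroup N1] [Module A N1] [AddCommGroup N2] [Module A N2]
    [AddCommGroup P1] [Module A P1] [AddCommGroup P2] [Module A P2]
    (φ1 : N1 ≃ₗ[A] P1) (φ2 : N2 ≃ₗ[A] P2) (f : P2 →ₗ[A] P1) :
    LinearMap.ker (φ1.symm.toLinearMap ∘ₗ f ∘ₗ φ2.toLinearMap) =
      Submodule.comap φ2.toLinearMap (LinearMap.ker f) := by
  rw [LinearMap.ker_comp, LinearEquiv.ker, Submodule.comap_bot, LinearMap.ker_comp]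

lemma conj_range {N1 N2 P1 P2 : Type} [AddCommGroup N1] [Module A N1] [AddCommGroup N2]
    [Module A N2] [AddCommGroup P1] [Module A P1] [AddCommGroup P2] [Module A P2]
    (φ1 : N1 ≃ₗ[A] P1) (φ2 : N2 ≃ₗ[A] P2) (f : P2 →ₗ[A] P1) :
    LinearMap.range (φ1.symm.toLinearMap ∘ₗ f ∘ₗ φ2.toLinearMap) =
      Submodule.map φ1.symm.toLinearMap (LinearMap.range f) := by
  rw [LinearMap.range_comp, LinearMap.range_comp, LinearEquiv.range, Submodule.map_top]

lemma split_step {a b n' m' : ℕ} (ha : a = n'+1) (hb : b = m'+1)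
    (d : (Fin b → A) →ₗ[A] (Fin a → A)) (j : Fin a) (k : Fin b)
    (hu : IsUnit (d (Pi.single k 1) j)) :
    ∃ (α : (Fin b → A) ≃ₗ[A] ((Fin m' → A) × (Fin 1 → A)))
      (β : (Fin a → A) ≃ₗ[A] ((Fin n' → A) × (Fin 1 → A)))
      (d' : (Fin m' → A) →ₗ[A] (Fin n' → A)),
      (d'.prodMap (LinearMap.id : (Fin 1 → A) →ₗ[A] (Fin 1 → A))) ∘ₗ (α : (Fin b → A) →ₗ[A] _)
        = (β : (Fin a → A) →ₗ[A] _) ∘ₗ d ∧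
      (∀ y, d y = 0 → (α y).2 = 0) ∧
      (∀ x, β.symm ((β x).1, 0) - x ∈ Submodule.span A {d (Pi.single k 1)}) := by
  subst ha; subst hb
  set v : Fin (n'+1) → A := d (Pi.single k 1) with hv
  set w : A := ↑hu.unit⁻¹ with hw
  have hwu : w * v j = 1 := hu.val_inv_mul
  set π : (Fin (n'+1) → A) →ₗ[A] A := w • LinearMap.proj j with hπ
  have hπ_apply : ∀ x, π x = w * x j := fun x => rfl
  set σ : (Fin (m'+1) → A) →ₗ[A] A := π ∘ₗ d with hσ
  set sub : (Fin (n'+1) → A) →ₗ[A] (Fin (n'+1) → A) := LinearMap.id - π.smulRight v with hsub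
  have hsub_apply : ∀ x, sub x = x - π x • v := fun x => rfl
  set one1 : (Fin 1 → A) →ₗ[A] A := LinearMap.proj 0 with hone1
  set toOne : A →ₗ[A] (Fin 1 → A) := LinearMap.pi fun _ => LinearMap.id with htoOne
  -- β
  set βto : (Fin (n'+1) → A) →ₗ[A] (Fin n' → A) × (Fin 1 → A) :=
    LinearMap.prod (del j ∘ₗ sub) (toOne ∘ₗ π) with hβto
  set βinv : (Fin n' → A) × (Fin 1 → A) →ₗ[A] (Fin (n'+1) → A) :=
    (ins j ∘ₗ LinearMap.fst A _ _) + ((one1 ∘ₗ LinearMap.snd A _ _).smulRight v) with hβinv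
  have pβ1 : βto ∘ₗ βinv = LinearMap.id := by
    apply LinearMap.ext; rintro ⟨z, c⟩
    have hXj : (βinv (z, c)) j = c 0 * v j := by
      simp [hβinv, hone1]
    refine Prod.ext ?_ ?_
    · funext q
      simp only [LinearMap.comp_apply, LinearMap.id_apply, hβto, LinearMap.prod_apply,
        Function.prod, hsub_apply, LinearMap.sub_apply, del_apply, Pi.sub_apply, hπ_apply, hXj,
        Pi.smul_apply, smul_eq_mul]
      simp only [hβinv, LinearMap.add_apply, LinearMap.comp_apply, LinearMap.fst_apply,
        LinearMap.snd_apply, LinearMap.smulRight_apply, hone1, LinearMap.proj_apply,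
        Pi.add_apply, ins_apply_succAbove, Pi.smul_apply, smul_eq_mul]
      linear_combination (-(c 0 * v (j.succAbove q))) * hwu
    · funext q
      have hq : q = 0 := Subsingleton.elim q 0
      subst hq
      simp only [LinearMap.comp_apply, LinearMap.id_apply, hβto, LinearMap.prod_apply,
        Function.prod, htoOne, LinearMap.pi_apply, hπ_apply, hXj]
      linear_combination c 0 * hwu
  have pβ2 : βinv ∘ₗ βto = LinearMap.id := by
    apply LinearMap.ext; intro x
    funext p
    have h3 : (βinv ∘ₗ βto) x p = ins j (del j (sub x)) p + (w * x j) * v p := rfl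
    rw [h3, ins_del]
    have hsx : ∀ r, sub x r = x r - w * x j * v r := fun r => rfl
    simp only [Pi.sub_apply, Pi.smul_apply, smul_eq_mul, hsx, LinearMap.id_apply]
    linear_combination ((x j) * ((Pi.single j 1 : Fin (n'+1) → A) p)) * hwu
  set β : (Fin (n'+1) → A) ≃ₗ[A] (Fin n' → A) × (Fin 1 → A) :=
    LinearEquiv.ofLinear βto βinv pβ1 pβ2 with hβ
  -- α
  set αto : (Fin (m'+1) → A) →ₗ[A] (Fin m' → A) × (Fin 1 → A) :=
    LinearMap.prod (del k) (toOne ∘ₗ σ) with hαto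
  set αinv : (Fin m' → A) × (Fin 1 → A) →ₗ[A] (Fin (m'+1) → A) :=
    (ins k ∘ₗ LinearMap.fst A _ _) +
      ((one1 ∘ₗ LinearMap.snd A _ _) - σ ∘ₗ ins k ∘ₗ LinearMap.fst A _ _).smulRight
        (Pi.single k 1) with hαinv
  have hσ_single : σ (Pi.single k 1) = w * v j := by
    simp [hσ, hπ_apply, hv]
  have pα1 : αto ∘ₗ αinv = LinearMap.id := by
    apply LinearMap.ext; rintro ⟨z, c⟩
    have h4 : ∀ r, αinv (z, c) r =
        ins k z r + (c 0 - σ (ins k z)) * (Pi.single k 1 : Fin (m'+1) → A) r := fun r => rfl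
    refine Prod.ext ?_ ?_
    · funext q
      have h5 : ((αto ∘ₗ αinv) (z, c)).1 q = αinv (z, c) (k.succAbove q) := rfl
      rw [h5, h4, Pi.single_apply, if_neg (Fin.succAbove_ne k q), ins_apply_succAbove]
      show z q + (c 0 - σ (ins k z)) * 0 = z q
      ring
    · funext q
      have hq : q = 0 := Subsingleton.elim q 0
      subst hq
      have h5 : ((αto ∘ₗ αinv) (z, c)).2 0 = σ (αinv (z, c)) := rfl
      have h6 : αinv (z, c) = ins k z + (c 0 - σ (ins k z)) • (Pi.single k 1 : Fin (m'+1) → A) :=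
        rfl
      rw [h5, h6, map_add, map_smul, hσ_single]
      show σ (ins k z) + (c 0 - σ (ins k z)) * (w * v j) = c 0
      linear_combination (c 0 - σ (ins k z)) * hwu
  have pα2 : αinv ∘ₗ αto = LinearMap.id := by
    apply LinearMap.ext; intro y
    funext p
    have h5 : (αinv ∘ₗ αto) y p = ins k (del k y) p +
        (σ y - σ (ins k (del k y))) * (Pi.single k 1 : Fin (m'+1) → A) p := rfl
    rw [h5, ins_del, map_sub, map_smul, hσ_single]
    simp only [Pi.sub_apply, Pi.smul_apply, smul_eq_mul, LinearMap.id_apply]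
    linear_combination (y k * (Pi.single k 1 : Fin (m'+1) → A) p) * hwu
  set α : (Fin (m'+1) → A) ≃ₗ[A] (Fin m' → A) × (Fin 1 → A) :=
    LinearEquiv.ofLinear αto αinv pα1 pα2 with hα
  -- d'
  set d' : (Fin m' → A) →ₗ[A] (Fin n' → A) := del j ∘ₗ sub ∘ₗ d ∘ₗ ins k with hd'
  refine ⟨α, β, d', ?_, ?_, ?_⟩
  · apply LinearMap.ext; intro y
    refine Prod.ext ?_ ?_
    · funext q
      show d' (del k y) q = del j (sub (d y)) q
      have h1 : ins k (del k y) = y - y k • (Pi.single k 1 : Fin (m'+1) → A) := ins_del k y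
      have h5 : d' (del k y) q = sub (d (ins k (del k y))) (j.succAbove q) := rfl
      have h7 : del j (sub (d y)) q = sub (d y) (j.succAbove q) := rfl
      rw [h5, h7, h1, map_sub, map_smul]
      have hs2 : ∀ z r, sub z r = z r - (w * z j) * v r := fun z r => rfl
      simp only [← hv, hs2, Pi.sub_apply, Pi.smul_apply, smul_eq_mul]
      linear_combination (y k * v (j.succAbove q)) * hwu
    · show toOne (σ y) = toOne (π (d y))
      rfl
  · intro y hy
    show toOne (σ y) = 0
    simp [hσ, hy]
  · intro x
    have h0 : (sub x) j = 0 := by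
      have h8 : sub x j = x j - w * x j * v j := rfl
      rw [h8]
      linear_combination (-(x j)) * hwu
    have hβsymm : β.symm ((β x).1, 0) = βinv ((βto x).1, 0) := rfl
    have h9 : βinv ((βto x).1, 0) = ins j (del j (sub x)) := by
      simp [hβinv, hβto, hone1]
    have h6 : sub x = x - π x • v := rfl
    rw [hβsymm, h9, ins_del, h0, zero_smul, sub_zero, h6]
    have h10 : x - π x • v - x = (-(π x)) • v := by
      rw [neg_smul]
      abel
    rw [h10]
    exact Submodule.smul_mem _ _ (Submodule.mem_span_singleton_self v)

section Modified

variable {M : Type} [AddCommGroup M] [Module A M]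
variable (i n' m' : ℕ) (rG : ℕ → ℕ)

def rN : ℕ → ℕ := fun t => if t = i then n' else if t = i+1 then m' else rG t

lemma rN_i : rN i n' m' rG i = n' := by simp [rN]
lemma rN_i1 : rN i n' m' rG (i+1) = m' := by
  simp only [rN]; rw [if_neg (by omega)]; simp
lemma rN_other {t : ℕ} (h1 : t ≠ i) (h2 : t ≠ i+1) : rN i n' m' rG t = rG t := by
  simp only [rN]; rw [if_neg h1, if_neg h2]

variable (dG : ∀ t, (Fin (rG (t+1)) → A) →ₗ[A] (Fin (rG t) → A))
variable (α : (Fin (rG (i+1)) → A) ≃ₗ[A] ((Fin m' → A) × (Fin 1 → A)))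
variable (β : (Fin (rG i) → A) ≃ₗ[A] ((Fin n' → A) × (Fin 1 → A)))
variable (d' : (Fin m' → A) →ₗ[A] (Fin n' → A))

def dN : ∀ t, (Fin (rN i n' m' rG (t+1)) → A) →ₗ[A] (Fin (rN i n' m' rG t) → A) := fun t =>
  if h1 : t = i then
    (ecast (show n' = rN i n' m' rG t by rw [h1, rN_i])).toLinearMap ∘ₗ d' ∘ₗ
      (ecast (show rN i n' m' rG (t+1) = m' by rw [h1]; exact rN_i1 i n' m' rG)).toLinearMap
  else if h2 : t = i+1 then
    (ecast (show m' = rN i n' m' rG t by rw [h2]; exact (rN_i1 i n' m' rG).symm)).toLinearMap ∘ₗ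
      (LinearMap.fst A (Fin m' → A) (Fin 1 → A)) ∘ₗ α.toLinearMap ∘ₗ dG (i+1) ∘ₗ
      (ecast (show rN i n' m' rG (t+1) = rG (i+2) by
        rw [h2]; exact rN_other i n' m' rG (by omega) (by omega))).toLinearMap
  else if h3 : t+1 = i then
    (ecast ((rN_other i n' m' rG h1 h2).symm)).toLinearMap ∘ₗ dG t ∘ₗ
      (ecast (show rG i = rG (t+1) by rw [h3])).toLinearMap ∘ₗ β.symm.toLinearMap ∘ₗ
      (LinearMap.inl A (Fin n' → A) (Fin 1 → A)) ∘ₗ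
      (ecast (show rN i n' m' rG (t+1) = n' by rw [h3]; exact rN_i i n' m' rG)).toLinearMap
  else
    (ecast ((rN_other i n' m' rG h1 h2).symm)).toLinearMap ∘ₗ dG t ∘ₗ
      (ecast (show rN i n' m' rG (t+1) = rG (t+1) from
        rN_other i n' m' rG h3 (fun hh => h1 (by omega)))).toLinearMap

def epsN (epsG : (Fin (rG 0) → A) →ₗ[A] M) : (Fin (rN i n' m' rG 0) → A) →ₗ[A] M :=
  if h : i = 0 then
    epsG ∘ₗ (ecast (show rG i = rG 0 by rw [h])).toLinearMap ∘ₗ β.symm.toLinearMap ∘ₗ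
      (LinearMap.inl A (Fin n' → A) (Fin 1 → A)) ∘ₗ
      (ecast (show rN i n' m' rG 0 = n' by rw [← h]; exact rN_i i n' m' rG)).toLinearMap
  else
    epsG ∘ₗ
      (ecast (show rN i n' m' rG 0 = rG 0 from rN_other i n' m' rG (by omega) (by omega))).toLinearMap

def eGN : ∀ t, (Fin (rG t) → A) ≃ₗ[A] ((Fin (rN i n' m' rG t) → A) × (Fin (rT i t) → A)) :=
  fun t =>
  if h1 : t = i then
    (ecast (show rG t = rG i by rw [h1])).trans (β.trans
      (LinearEquiv.prodCongr (ecast (show n' = rN i n' m' rG t by rw [h1, rN_i]))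
        (ecast (show 1 = rT i t by rw [h1, rT_i]))))
  else if h2 : t = i+1 then
    (ecast (show rG t = rG (i+1) by rw [h2])).trans (α.trans
      (LinearEquiv.prodCongr (ecast (show m' = rN i n' m' rG t by rw [h2]; exact (rN_i1 i n' m' rG).symm))
        (ecast (show 1 = rT i t by rw [h2, rT_i1]))))
  else
    padEquiv ((rN_other i n' m' rG h1 h2).symm) (rT_other h1 h2)

end Modified

section Comm

variable {M : Type} [AddCommGroup M] [Module A M]
variable {i n' m' : ℕ} {rG : ℕ → ℕ}
variable (dG : ∀ t, (Fin (rG (t+1)) → A) →ₗ[A] (Fin (rG t) → A))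
variable (α : (Fin (rG (i+1)) → A) ≃ₗ[A] ((Fin m' → A) × (Fin 1 → A)))
variable (β : (Fin (rG i) → A) ≃ₗ[A] ((Fin n' → A) × (Fin 1 → A)))
variable (d' : (Fin m' → A) →ₗ[A] (Fin n' → A))

lemma padEquiv_snd {a b c : ℕ} (hab : a = b) (hc : c = 0) (x : Fin a → A) :
    (padEquiv hab hc x).2 = 0 := by
  subst hab; subst hc; rfl

lemma dN_comm
    (hd : (d'.prodMap (LinearMap.id : (Fin 1 → A) →ₗ[A] (Fin 1 → A))) ∘ₗ
        (α : (Fin (rG (i+1)) → A) →ₗ[A] _) = (β : (Fin (rG i) → A) →ₗ[A] _) ∘ₗ dG i)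
    (hα2 : ∀ y, dG i y = 0 → (α y).2 = 0)
    (hβr : ∀ x, β.symm ((β x).1, 0) - x ∈ LinearMap.range (dG i))
    (hGex : ∀ t, LinearMap.ker (dG t) = LinearMap.range (dG (t+1))) :
    ∀ t, ((dN i n' m' rG dG α β d' t).prodMap (sumAll (rT i (t+1)) (rT i t))) ∘ₗ
        (eGN i n' m' rG α β (t+1)).toLinearMap
      = (eGN i n' m' rG α β t).toLinearMap ∘ₗ dG t := by
  intro t
  by_cases h1 : t = i
  · subst h1
    apply LinearMap.ext; intro y
    have hdp := LinearMap.congr_fun hd y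
    simp only [LinearMap.comp_apply, LinearEquiv.coe_coe, LinearMap.prodMap_apply,
      LinearMap.id_coe, id_eq] at hdp
    refine Prod.ext ?_ ?_
    · simp only [dN, eGN, LinearMap.comp_apply, LinearEquiv.coe_coe, LinearMap.prodMap_apply]
      split_ifs <;> try omega
      all_goals try (exact absurd trivial (by assumption))
      all_goals try contradiction
      all_goals (
        simp only [LinearEquiv.trans_apply, LinearEquiv.prodCongr_apply, LinearMap.comp_apply,
          LinearEquiv.coe_coe]
        funext q
        exact congrFun (congrArg Prod.fst hdp) _)
    · simp only [dN, eGN, LinearMap.comp_apply, LinearEquiv.coe_coe, LinearMap.prodMap_apply]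
      split_ifs <;> try omega
      all_goals try (exact absurd trivial (by assumption))
      all_goals try contradiction
      all_goals (
        simp only [LinearEquiv.trans_apply, LinearEquiv.prodCongr_apply, LinearMap.comp_apply,
          LinearEquiv.coe_coe]
        funext q
        haveI : Unique (Fin (rT t (t+1))) := by rw [rT_i1]; infer_instance
        simp only [sumAll_apply]
        rw [Fintype.sum_unique]
        have h2 := congrFun (congrArg Prod.snd hdp)
        simp only [ecast_apply, ecast_self]
        rw [← h2]
        exact congrArg ((α y).2) (Subsingleton.elim _ _))
  · by_cases h2 : t = i + 1
    · subst h2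
      apply LinearMap.ext; intro y
      have hker : dG i (dG (i+1) y) = 0 := by
        have hmem : dG (i+1) y ∈ LinearMap.ker (dG i) := by
          rw [hGex i]; exact ⟨y, rfl⟩
        exact hmem
      have hz : (ecast (show rN i n' m' rG (i+1+1) = rG (i+2) from
          rN_other i n' m' rG (by omega) (by omega)))
          ((padEquiv ((rN_other i n' m' rG (show i+1+1 ≠ i by omega)
            (show i+1+1 ≠ i+1 by omega)).symm)
            (rT_other (show i+1+1 ≠ i by omega) (show i+1+1 ≠ i+1 by omega)) y).1) = y := by
        funext r
        rw [ecast_apply, padEquiv_fst]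
        exact rfl
      refine Prod.ext ?_ ?_
      · simp only [dN, eGN, LinearMap.comp_apply, LinearEquiv.coe_coe, LinearMap.prodMap_apply]
        split_ifs <;> try omega
        all_goals try (exact absurd trivial (by assumption))
        all_goals try contradiction
        all_goals (
          simp only [LinearEquiv.trans_apply, LinearEquiv.prodCongr_apply, LinearMap.comp_apply,
            LinearEquiv.coe_coe]
          funext q
          rw [hz]
          exact rfl)
      · simp only [dN, eGN, LinearMap.comp_apply, LinearEquiv.coe_coe, LinearMap.prodMap_apply]
        split_ifs <;> try omega
        all_goals try (exact absurd trivial (by assumption))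
        all_goals try contradiction
        all_goals (
          simp only [LinearEquiv.trans_apply, LinearEquiv.prodCongr_apply, LinearMap.comp_apply,
            LinearEquiv.coe_coe]
          funext q
          rw [padEquiv_snd, map_zero]
          exact (congrFun (hα2 (dG (i+1) y) hker) _).symm)
    · by_cases h3 : t + 1 = i
      · subst h3
        apply LinearMap.ext; intro x
        have h7 : dG t (β.symm ((β x).1, 0)) = dG t x := by
          obtain ⟨y0, hy0⟩ := hβr x
          have hb : β.symm ((β x).1, 0) = x + dG (t+1) y0 := by
            rw [hy0]; abel
          rw [hb, map_add]
          have hker : dG t (dG (t+1) y0) = 0 := by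
            have hmem : dG (t+1) y0 ∈ LinearMap.ker (dG t) := by
              rw [hGex t]; exact ⟨y0, rfl⟩
            exact hmem
          rw [hker, add_zero]
        refine Prod.ext ?_ ?_
        · simp only [dN, eGN, LinearMap.comp_apply, LinearEquiv.coe_coe, LinearMap.prodMap_apply]
          split_ifs <;> try omega
          all_goals try (exact absurd trivial (by assumption))
          all_goals try contradiction
          all_goals (
            simp only [LinearEquiv.trans_apply, LinearEquiv.prodCongr_apply, LinearMap.comp_apply,
              LinearEquiv.coe_coe]
            funext q
            rw [padEquiv_fst]
            exact congrFun h7 _)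
        · haveI := subsingleton_fun (A := A) (rT_other (show t ≠ t+1 by omega)
            (show t ≠ t+1+1 by omega))
          exact Subsingleton.elim _ _
      · apply LinearMap.ext; intro y
        have hz : (ecast (show rN i n' m' rG (t+1) = rG (t+1) from
            rN_other i n' m' rG h3 (fun hh => h1 (by omega))))
            ((padEquiv ((rN_other i n' m' rG h3 (fun hh => h1 (by omega))).symm)
              (rT_other h3 (fun hh => h1 (by omega))) y).1) = y := by
          funext r
          rw [ecast_apply, padEquiv_fst]
          exact rfl
        refine Prod.ext ?_ ?_
        · simp only [dN, eGN, LinearMap.comp_apply, LinearEquiv.coe_coe, LinearMap.prodMap_apply]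
          split_ifs <;> try omega
          all_goals try (exact absurd trivial (by assumption))
          all_goals try contradiction
          all_goals (
            simp only [LinearMap.comp_apply, LinearEquiv.coe_coe]
            funext q
            rw [hz, padEquiv_fst]
            exact rfl)
        · haveI := subsingleton_fun (A := A) (rT_other h1 h2)
          exact Subsingleton.elim _ _

lemma epsN_comm (epsG : (Fin (rG 0) → A) →ₗ[A] M)
    (hβr : ∀ x, β.symm ((β x).1, 0) - x ∈ LinearMap.range (dG i))
    (hG0 : LinearMap.ker epsG = LinearMap.range (dG 0)) :
    (epsN i n' m' rG β epsG) ∘ₗ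
      (LinearMap.fst A (Fin (rN i n' m' rG 0) → A) (Fin (rT i 0) → A)) ∘ₗ
      (eGN i n' m' rG α β 0).toLinearMap = epsG := by
  by_cases h : i = 0
  · subst h
    apply LinearMap.ext; intro x
    have h7 : epsG (β.symm ((β x).1, 0)) = epsG x := by
      obtain ⟨y0, hy0⟩ := hβr x
      have hb : β.symm ((β x).1, 0) = x + dG 0 y0 := by rw [hy0]; abel
      rw [hb, map_add]
      have hm : dG 0 y0 ∈ LinearMap.ker epsG := by rw [hG0]; exact ⟨y0, rfl⟩
      rw [show epsG (dG 0 y0) = 0 from hm, add_zero]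
    simp only [epsN, eGN, LinearMap.comp_apply, LinearEquiv.coe_coe, LinearMap.fst_apply]
    split_ifs <;> try omega
    all_goals try (exact absurd trivial (by assumption))
    all_goals try contradiction
    all_goals (
      simp only [LinearEquiv.trans_apply, LinearEquiv.prodCongr_apply, LinearMap.comp_apply,
        LinearEquiv.coe_coe]
      exact h7)
  · apply LinearMap.ext; intro x
    simp only [epsN, eGN, LinearMap.comp_apply, LinearEquiv.coe_coe, LinearMap.fst_apply]
    split_ifs <;> try omega
    all_goals try (exact absurd trivial (by assumption))
    all_goals try contradiction
    all_goals (
      simp only [LinearMap.comp_apply, LinearEquiv.coe_coe]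
      refine congrArg epsG ?_
      funext r
      rw [ecast_apply, padEquiv_fst]
      exact rfl)

end Comm


section Main

def Concl (A : Type) [CommRing A] [IsLocalRing A] (M : Type) [AddCommGroup M] [Module A M]
    (rG : ℕ → ℕ) (dG : ∀ i : ℕ, (Fin (rG (i+1)) → A) →ₗ[A] (Fin (rG i) → A))
    (epsG : (Fin (rG 0) → A) →ₗ[A] M) : Prop :=
  ∃ (rF rH : ℕ → ℕ)
    (dF : ∀ i : ℕ, (Fin (rF (i+1)) → A) →ₗ[A] (Fin (rF i) → A))
    (dH : ∀ i : ℕ, (Fin (rH (i+1)) → A) →ₗ[A] (Fin (rH i) → A))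
    (epsF : (Fin (rF 0) → A) →ₗ[A] M),
    Function.Surjective epsF ∧
    LinearMap.ker epsF = LinearMap.range (dF 0) ∧
    (∀ i, LinearMap.ker (dF i) = LinearMap.range (dF (i+1))) ∧
    (∀ i, LinearMap.range (dF i) ≤
      (IsLocalRing.maximalIdeal A) • (⊤ : Submodule A (Fin (rF i) → A))) ∧
    Function.Surjective (dH 0) ∧
    (∀ i, LinearMap.ker (dH i) = LinearMap.range (dH (i+1))) ∧
    (∃ t : ℕ, ∀ i, t < i → rF i = 0 ∧ rH i = 0) ∧
    ∃ e : ∀ i : ℕ, (Fin (rG i) → A) ≃ₗ[A] ((Fin (rF i) → A) × (Fin (rH i) → A)),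
      (∀ i, ((dF i).prodMap (dH i)).comp (e (i+1)).toLinearMap =
        (e i).toLinearMap.comp (dG i)) ∧
      epsF.comp ((LinearMap.fst A (Fin (rF 0) → A) (Fin (rH 0) → A)).comp
        (e 0).toLinearMap) = epsG

variable [IsLocalRing A] {M : Type} [AddCommGroup M] [Module A M]

lemma minimal_case (rG : ℕ → ℕ) (dG : ∀ i : ℕ, (Fin (rG (i+1)) → A) →ₗ[A] (Fin (rG i) → A))
    (epsG : (Fin (rG 0) → A) →ₗ[A] M)
    (hGsurj : Function.Surjective epsG)
    (hG0 : LinearMap.ker epsG = LinearMap.range (dG 0))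
    (hGex : ∀ t, LinearMap.ker (dG t) = LinearMap.range (dG (t+1)))
    (hGfin : ∃ s, ∀ t, s < t → rG t = 0)
    (hmin : ∀ t, LinearMap.range (dG t) ≤
      (IsLocalRing.maximalIdeal A) • (⊤ : Submodule A (Fin (rG t) → A))) :
    Concl A M rG dG epsG := by
  obtain ⟨s, hfin⟩ := hGfin
  refine ⟨rG, fun _ => 0, dG, fun _ => 0, epsG, hGsurj, hG0, hGex, hmin, ?_, ?_,
    ⟨s, fun t ht => ⟨hfin t ht, rfl⟩⟩, ⟨fun t => padEquiv rfl rfl, ?_, ?_⟩⟩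
  · exact surj_tgt0 rfl _
  · intro t
    exact submodule_eq_rank0 rfl _ _
  · intro t
    apply LinearMap.ext; intro y
    refine Prod.ext rfl ?_
    haveI := subsingleton_fun (A := A) (rfl : (0:ℕ) = 0)
    exact Subsingleton.elim _ _
  · apply LinearMap.ext; intro x
    rfl

theorem aux (N : ℕ) :
    ∀ (s : ℕ) (rG : ℕ → ℕ) (dG : ∀ t : ℕ, (Fin (rG (t+1)) → A) →ₗ[A] (Fin (rG t) → A))
      (epsG : (Fin (rG 0) → A) →ₗ[A] M),
      Function.Surjective epsG →
      LinearMap.ker epsG = LinearMap.range (dG 0) →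
      (∀ t, LinearMap.ker (dG t) = LinearMap.range (dG (t+1))) →
      (∀ t, s < t → rG t = 0) →
      (∑ t ∈ Finset.range (s+2), rG t) ≤ N →
      Concl A M rG dG epsG := by
  induction N with
  | zero =>
    intro s rG dG epsG hsurj h0 hex hfin hN
    refine minimal_case rG dG epsG hsurj h0 hex ⟨s, hfin⟩ ?_
    have hall : ∀ u, rG u = 0 := by
      intro u
      by_cases hu : u ≤ s + 1
      · have hle : rG u ≤ ∑ t ∈ Finset.range (s+2), rG t :=
          Finset.single_le_sum (fun t _ => Nat.zero_le _) (Finset.mem_range.mpr (by omega))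
        omega
      · exact hfin u (by omega)
    rintro t x ⟨y, rfl⟩
    haveI := subsingleton_fun (A := A) (hall (t+1))
    rw [Subsingleton.elim y 0, map_zero]
    exact Submodule.zero_mem _
  | succ n ih =>
    intro s rG dG epsG hsurj h0 hex hfin hN
    by_cases hmin : ∀ t, LinearMap.range (dG t) ≤
        (IsLocalRing.maximalIdeal A) • (⊤ : Submodule A (Fin (rG t) → A))
    · exact minimal_case rG dG epsG hsurj h0 hex ⟨s, hfin⟩ hmin
    · push_neg at hmin
      obtain ⟨i, hi⟩ := hmin
      obtain ⟨x0, hx0mem, hx0⟩ := SetLike.not_le_iff_exists.mp hi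
      obtain ⟨y0, rfl⟩ := hx0mem
      rw [mem_smul_top_iff] at hx0
      push_neg at hx0
      obtain ⟨j, hj⟩ := hx0
      have hk : ∃ kk, (dG i (Pi.single kk 1)) j ∉ IsLocalRing.maximalIdeal A := by
        by_contra hcon; push_neg at hcon
        apply hj
        have hy0 : y0 = ∑ kk, y0 kk • (Pi.single kk (1:A) : Fin (rG (i+1)) → A) := by
          funext p
          simp [Pi.single_apply, Finset.sum_apply, mul_ite]
        have hy : dG i y0 = ∑ kk, y0 kk • dG i (Pi.single kk (1:A)) := by
          conv_lhs => rw [hy0]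
          rw [map_sum]
          simp [map_smul]
        rw [hy, Finset.sum_apply]
        refine Ideal.sum_mem _ fun kk _ => ?_
        simp only [Pi.smul_apply, smul_eq_mul]
        exact Ideal.mul_mem_left _ _ (hcon kk)
      obtain ⟨k, hk⟩ := hk
      have hu : IsUnit (dG i (Pi.single k 1) j) := IsLocalRing.notMem_maximalIdeal.mp hk
      have hn : rG i = (rG i - 1) + 1 := by have := j.pos; omega
      have hm : rG (i+1) = (rG (i+1) - 1) + 1 := by have := k.pos; omega
      have hi1 : i + 1 ≤ s := by
        by_contra hcon
        have h00 : rG (i+1) = 0 := hfin (i+1) (by omega)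
        have := k.pos; omega
      obtain ⟨α, β, d', hd, hα2, hspan⟩ := split_step hn hm (dG i) j k hu
      have hβr : ∀ x, β.symm ((β x).1, 0) - x ∈ LinearMap.range (dG i) := by
        intro x
        have hsub : Submodule.span A {dG i (Pi.single k 1)} ≤ LinearMap.range (dG i) := by
          rw [Submodule.span_le, Set.singleton_subset_iff]
          exact ⟨Pi.single k 1, rfl⟩
        exact hsub (hspan x)
      obtain ⟨hKsurj, hK0, hKex⟩ := transfer dG
        (fun t => (dN i (rG i - 1) (rG (i+1) - 1) rG dG α β d' t).prodMap (sumAll (rT i (t+1)) (rT i t)))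
        epsG ((epsN i (rG i - 1) (rG (i+1) - 1) rG β epsG) ∘ₗ LinearMap.fst A _ _)
        (eGN i (rG i - 1) (rG (i+1) - 1) rG α β)
        (dN_comm dG α β d' hd hα2 hβr hex)
        (by rw [LinearMap.comp_assoc]; exact epsN_comm dG α β epsG hβr h0)
        hsurj h0 hex
      have hNex : ∀ t, LinearMap.ker (dN i (rG i - 1) (rG (i+1) - 1) rG dG α β d' t) =
          LinearMap.range (dN i (rG i - 1) (rG (i+1) - 1) rG dG α β d' (t+1)) := by
        intro t
        have hh := hKex t
        rw [LinearMap.ker_prodMap, range_prodMap] at hh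
        exact (prod_inj hh).1
      have hN0 : LinearMap.ker (epsN i (rG i - 1) (rG (i+1) - 1) rG β epsG) =
          LinearMap.range (dN i (rG i - 1) (rG (i+1) - 1) rG dG α β d' 0) := by
        have hh := hK0
        rw [comap_fst_ker, range_prodMap] at hh
        exact (prod_inj hh).1
      have hNsurj : Function.Surjective (epsN i (rG i - 1) (rG (i+1) - 1) rG β epsG) := by
        intro z; obtain ⟨w, hw⟩ := hKsurj z; exact ⟨w.1, hw⟩
      have hNfin : ∀ t, s < t → rN i (rG i - 1) (rG (i+1) - 1) rG t = 0 := by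
        intro t ht
        rw [rN_other i (rG i - 1) (rG (i+1) - 1) rG (by omega) (by omega)]
        exact hfin t ht
      have hNsum : (∑ t ∈ Finset.range (s+2), rN i (rG i - 1) (rG (i+1) - 1) rG t) ≤ n := by
        have hlt : (∑ t ∈ Finset.range (s+2), rN i (rG i - 1) (rG (i+1) - 1) rG t) <
            ∑ t ∈ Finset.range (s+2), rG t := by
          apply Finset.sum_lt_sum
          · intro t _
            by_cases e1 : t = i
            · subst e1; rw [rN_i]; omega
            · by_cases e2 : t = i+1
              · subst e2; rw [rN_i1]; omega
              · rw [rN_other i (rG i - 1) (rG (i+1) - 1) rG e1 e2]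
          · exact ⟨i, Finset.mem_range.mpr (by omega), by rw [rN_i]; omega⟩
        omega
      obtain ⟨rF, rH', dF, dH', epsF, hFsurj, hF0, hFex, hFmin, hH'surj, hH'ex, ⟨t0, ht0⟩,
        e', hcomm', heps'⟩ := ih s (rN i (rG i - 1) (rG (i+1) - 1) rG) (dN i (rG i - 1) (rG (i+1) - 1) rG dG α β d')
          (epsN i (rG i - 1) (rG (i+1) - 1) rG β epsG) hNsurj hN0 hNex hNfin hNsum
      refine ⟨rF, fun t => rH' t + rT i t, dF,
        fun t => (finProdEquiv (rH' t) (rT i t)).symm.toLinearMap ∘ₗ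
          ((dH' t).prodMap (sumAll (rT i (t+1)) (rT i t))) ∘ₗ
          (finProdEquiv (rH' (t+1)) (rT i (t+1))).toLinearMap,
        epsF, hFsurj, hF0, hFex, hFmin, ?_, ?_, ?_, ?_⟩
      · intro z
        obtain ⟨w1, hw1⟩ := hH'surj ((finProdEquiv (rH' 0) (rT i 0)) z).1
        obtain ⟨w2, hw2⟩ := dT0_surj (A := A) i ((finProdEquiv (rH' 0) (rT i 0)) z).2
        refine ⟨(finProdEquiv (rH' 1) (rT i 1)).symm (w1, w2), ?_⟩
        simp only [LinearMap.comp_apply, LinearEquiv.coe_coe, LinearEquiv.apply_symm_apply,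
          LinearMap.prodMap_apply, hw1, hw2]
        exact (finProdEquiv (rH' 0) (rT i 0)).symm_apply_apply z
      · intro t
        rw [conj_ker, conj_range, LinearMap.ker_prodMap, range_prodMap, hH'ex t, dT_exact i t,
          ← range_prodMap, Submodule.comap_equiv_eq_map_symm]
      · refine ⟨t0 + s + 2, fun t ht => ⟨(ht0 t (by omega)).1, ?_⟩⟩
        show rH' t + rT i t = 0
        rw [(ht0 t (by omega)).2, rT_other (show t ≠ i by omega) (show t ≠ i+1 by omega)]
      · refine ⟨fun t => (eGN i (rG i - 1) (rG (i+1) - 1) rG α β t).trans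
          (((e' t).prodCongr (LinearEquiv.refl A (Fin (rT i t) → A))).trans
            ((LinearEquiv.prodAssoc A _ _ _).trans
              ((LinearEquiv.refl A (Fin (rF t) → A)).prodCongr
                (finProdEquiv (rH' t) (rT i t)).symm))), ?_, ?_⟩
        · intro t
          apply LinearMap.ext; intro x
          have hc := LinearMap.congr_fun (dN_comm dG α β d' hd hα2 hβr hex t) x
          have hc' := LinearMap.congr_fun (hcomm' t) ((eGN i (rG i - 1) (rG (i+1) - 1) rG α β (t+1)) x).1
          simp only [LinearMap.comp_apply, LinearEquiv.coe_coe, LinearMap.prodMap_apply]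
            at hc hc' ⊢
          simp only [LinearEquiv.trans_apply, LinearEquiv.prodCongr_apply, LinearEquiv.refl_apply,
            LinearEquiv.prodAssoc_apply, LinearEquiv.apply_symm_apply]
          rw [← hc, ← hc']
          exact rfl
        · apply LinearMap.ext; intro x
          have h1 := LinearMap.congr_fun (epsN_comm dG α β epsG hβr h0) x
          have h2 := LinearMap.congr_fun heps' ((eGN i (rG i - 1) (rG (i+1) - 1) rG α β 0) x).1
          simp only [LinearMap.comp_apply, LinearEquiv.coe_coe, LinearMap.fst_apply] at h1 h2 ⊢
          simp only [LinearEquiv.trans_apply, LinearEquiv.prodCongr_apply, LinearEquiv.refl_apply,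
            LinearEquiv.prodAssoc_apply]
          exact h2.trans h1

end Main

end ESplit

/-- **Eilenberg's splitting theorem.** A finite free resolution `G` of a
finitely generated module `M` over a noetherian local ring is isomorphic, as a complex over
`M`, to the direct sum of a minimal free resolution `F` of `M` and an exact complex `H` of
finitely generated free modules. -/
theorem eilenberg_splitting
    (A : Type) [CommRing A] [IsNoetherianRing A] [IsLocalRing A]
    (M : Type) [AddCommGroup M] [Module A M] [Module.Finite A M]
    (s : ℕ) (rG : ℕ → ℕ)
    (dG : ∀ i : ℕ, (Fin (rG (i+1)) → A) →ₗ[A] (Fin (rG i) → A))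
    (epsG : (Fin (rG 0) → A) →ₗ[A] M)
    (hGsurj : Function.Surjective epsG)
    (hG0 : LinearMap.ker epsG = LinearMap.range (dG 0))
    (hGex : ∀ i, LinearMap.ker (dG i) = LinearMap.range (dG (i+1)))
    (hGfin : ∀ i, s < i → rG i = 0) :
    ∃ (rF rH : ℕ → ℕ)
      (dF : ∀ i : ℕ, (Fin (rF (i+1)) → A) →ₗ[A] (Fin (rF i) → A))
      (dH : ∀ i : ℕ, (Fin (rH (i+1)) → A) →ₗ[A] (Fin (rH i) → A))
      (epsF : (Fin (rF 0) → A) →ₗ[A] M),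
      -- `F` is a minimal free resolution of `M`
      Function.Surjective epsF ∧
      LinearMap.ker epsF = LinearMap.range (dF 0) ∧
      (∀ i, LinearMap.ker (dF i) = LinearMap.range (dF (i+1))) ∧
      (∀ i, LinearMap.range (dF i) ≤
        (IsLocalRing.maximalIdeal A) • (⊤ : Submodule A (Fin (rF i) → A))) ∧
      -- `H` is an exact complex (a free resolution of `0`)
      Function.Surjective (dH 0) ∧
      (∀ i, LinearMap.ker (dH i) = LinearMap.range (dH (i+1))) ∧
      -- both complexes vanish in large degrees
      (∃ t : ℕ, ∀ i, t < i → rF i = 0 ∧ rH i = 0) ∧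
      -- `G ≅ F ⊕ H` as complexes, compatibly with the augmentations
      ∃ e : ∀ i : ℕ, (Fin (rG i) → A) ≃ₗ[A] ((Fin (rF i) → A) × (Fin (rH i) → A)),
        (∀ i, ((dF i).prodMap (dH i)).comp (e (i+1)).toLinearMap =
          (e i).toLinearMap.comp (dG i)) ∧
        epsF.comp ((LinearMap.fst A (Fin (rF 0) → A) (Fin (rH 0) → A)).comp
          (e 0).toLinearMap) = epsG := by
  exact ESplit.aux (∑ t ∈ Finset.range (s+2), rG t) s rG dG epsG hGsurj hG0 hGex hGfin le_rfl
end
end
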